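/- arXiv:1201.0405 — 2 statements merged into one kernel-verified Lean document; each statement's English description precedes it below -/
import Mathlib

section
/- Given any instance Nim−F of CIS-Nim, for every integer n > 2·F_max + |F|, the position {n,n,0} is a P-position of Nim−F. -/
open Filter

/-- A move in Nim: strictly decrease one heap. -/
def NimMove (a b : Multiset ℕ) : Prop :=
  ∃ x y, x ∈ a ∧ y < x ∧ b = y ::ₘ a.erase x

theorem NimMove.sum_lt {a b : Multiset ℕ} (h : NimMove a b) : b.sum < a.sum := by
  obtain ⟨x, y, hx, hyx, rfl⟩ := h
  have hc : x ::ₘ a.erase x = a := Multiset.cons_erase hx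
  have h1 : (y ::ₘ a.erase x).sum = y + (a.erase x).sum := Multiset.sum_cons y _
  have h2 : a.sum = x + (a.erase x).sum := by
    conv_lhs => rw [← hc]
    exact Multiset.sum_cons x _
  omega

/-- P-positions of Nim minus a forbidden finite set `F`, by the standard recursion:
a position is P iff every child not in `F` is an N-position. -/
def NimP (F : Finset (Multiset ℕ)) (a : Multiset ℕ) : Prop :=
  ∀ b, NimMove a b → b ∉ F → ¬ NimP F b
termination_by a.sum
decreasing_by exact NimMove.sum_lt (by assumption)

/-- A P-position of Nim−F : a valid position (not forbidden) which is P. -/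
def PPos (F : Finset (Multiset ℕ)) (a : Multiset ℕ) : Prop :=
  a ∉ F ∧ NimP F a

/-- Largest heap size appearing in any forbidden position. -/
def Fmax (F : Finset (Multiset ℕ)) : ℕ := F.sup Multiset.sup

/-- The set S of pairs (x,y) such that there is z with z < y < x and {x,y,z} a P-position. -/
def Sset (F : Finset (Multiset ℕ)) : Set (ℕ × ℕ) :=
  {p | ∃ z, z < p.2 ∧ p.2 < p.1 ∧ PPos F {p.1, p.2, z}}

/-- r(x,y): number of elements of S of the form (x',y) with x' ≥ x. -/
noncomputable def rdef (F : Finset (Multiset ℕ)) (x y : ℕ) : ℕ :=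
  {x' | x ≤ x' ∧ (x', y) ∈ Sset F}.ncard

/-- b(x,y): number of elements of S of the form (x,y') with y' ≤ y. -/
noncomputable def bdef (F : Finset (Multiset ℕ)) (x y : ℕ) : ℕ :=
  {y' | y' ≤ y ∧ (x, y') ∈ Sset F}.ncard

/-- U_{x,y} = A ∪ B ∪ C ∪ D. -/
def Uset (F : Finset (Multiset ℕ)) (x y : ℕ) : Set (ℕ × ℕ) :=
  {p | (p.2 < p.1 ∧ p.1 ≤ x ∧ bdef F p.1 p.1 ≥ p.1 - p.2) ∨
       (p.1 = x ∧ p.2 < y ∧ bdef F x (y - 1) ≥ y - p.2) ∨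
       (y ≤ p.2 ∧ p.2 < x ∧ x ≤ p.1 ∧ rdef F x p.2 > p.1 - x) ∨
       (p.2 < y ∧ y ≤ x ∧ x < p.1 ∧ rdef F (x + 1) p.2 > p.1 - (x + 1))}

/-- Ū_{x,y}: agrees with U_{x,y} for second coordinate < x, and for y' ≥ x contains
(x',y') iff y' < x' ≤ 2y' and (y', ⌊x'/2⌋) ∉ Ū_{x,y}. -/
def Ubar (F : Finset (Multiset ℕ)) (x y : ℕ) (p : ℕ × ℕ) : Prop :=
  if p.2 < x then p ∈ Uset F x y
  else if h : p.2 < p.1 then p.1 ≤ 2 * p.2 ∧ ¬ Ubar F x y (p.2, p.1 / 2)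
  else False
termination_by p.1
decreasing_by exact h

/-- S_n = Ū_{n,0}. -/
def Sn (F : Finset (Multiset ℕ)) (n : ℕ) : Set (ℕ × ℕ) := {p | Ubar F n 0 p}

/-- R_n = {(x,y) : y < n ≤ x ≤ 2y}. -/
def Rn (n : ℕ) : Set (ℕ × ℕ) := {p | p.2 < n ∧ n ≤ p.1 ∧ p.1 ≤ 2 * p.2}

/-- h(m,n) = |R_n ∩ S_m|. -/
noncomputable def hdef (F : Finset (Multiset ℕ)) (m n : ℕ) : ℕ := (Rn n ∩ Sn F m).ncard

/-- π(n): number of P-positions (unordered multisets) with all entries < n. -/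
noncomputable def piNim (F : Finset (Multiset ℕ)) (n : ℕ) : ℕ :=
  {s : Multiset ℕ | s.card = 3 ∧ (∀ a ∈ s, a < n) ∧ PPos F s}.ncard


lemma NimP_iff' (F : Finset (Multiset ℕ)) (a : Multiset ℕ) :
    NimP F a ↔ ∀ b, NimMove a b → b ∉ F → ¬ NimP F b := by
  rw [NimP]

lemma not_NimP' {F : Finset (Multiset ℕ)} {a : Multiset ℕ} (h : ¬ NimP F a) :
    ∃ b, NimMove a b ∧ b ∉ F ∧ NimP F b := by
  rw [NimP_iff'] at h
  push_neg at h
  exact h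

lemma mem_le_Fmax' {F : Finset (Multiset ℕ)} {s : Multiset ℕ} {x : ℕ}
    (hs : s ∈ F) (hx : x ∈ s) : x ≤ Fmax F :=
  le_trans (Multiset.le_sup hx) (Finset.le_sup hs)

lemma move_cons' {x y : ℕ} (s : Multiset ℕ) (h : y < x) :
    NimMove (x ::ₘ s) (y ::ₘ s) :=
  ⟨x, y, Multiset.mem_cons_self x s, h, by rw [Multiset.erase_cons_head]⟩

lemma line_unique' {F : Finset (Multiset ℕ)} {s : Multiset ℕ} {x y : ℕ}
    (hx : PPos F (x ::ₘ s)) (hy : y < x) : ¬ PPos F (y ::ₘ s) := by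
  intro hyP
  exact ((NimP_iff' F _).mp hx.2) _ (move_cons' s hy) hyP.1 hyP.2

lemma key' (F : Finset (Multiset ℕ)) (n k : ℕ) (hk : k < n)
    (hn : n > 2 * Fmax F + F.card)
    (hP : PPos F (n ::ₘ k ::ₘ ({0} : Multiset ℕ))) : False := by
  classical
  set W : Finset ℕ :=
    (Finset.range n).filter (fun w => (w ::ₘ k ::ₘ ({0} : Multiset ℕ)) ∉ F) with hW
  set W' : Finset ℕ :=
    (Finset.range n).filter (fun w => (w ::ₘ k ::ₘ ({0} : Multiset ℕ)) ∈ F) with hW'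
  have hmain : ∀ w ∈ W, ∃ c, c < k ∧ PPos F (c ::ₘ w ::ₘ ({0} : Multiset ℕ)) := by
    intro w hw
    rw [hW, Finset.mem_filter, Finset.mem_range] at hw
    obtain ⟨hwn, hwF⟩ := hw
    have hnotP : ¬ PPos F (w ::ₘ k ::ₘ ({0} : Multiset ℕ)) := line_unique' hP hwn
    have hnotNim : ¬ NimP F (w ::ₘ k ::ₘ ({0} : Multiset ℕ)) := fun h => hnotP ⟨hwF, h⟩
    obtain ⟨b, ⟨x, y, hxmem, hyx, rfl⟩, hbF, hbP⟩ := not_NimP' hnotNim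
    have hx : x = w ∨ x = k ∨ x = 0 := by simpa using hxmem
    rcases hx with h | h | h
    · subst h
      rw [Multiset.erase_cons_head] at hbF hbP
      exact absurd ⟨hbF, hbP⟩ (line_unique' hP (lt_trans hyx hwn))
    · subst h
      have he : (w ::ₘ x ::ₘ ({0} : Multiset ℕ)).erase x = w ::ₘ ({0} : Multiset ℕ) := by
        rw [Multiset.cons_swap, Multiset.erase_cons_head]
      rw [he] at hbF hbP
      exact ⟨y, hyx, hbF, hbP⟩
    · subst h
      exact absurd hyx (Nat.not_lt_zero y)
  have hchoice : ∀ w, ∃ c, w ∈ W → c < k ∧ PPos F (c ::ₘ w ::ₘ ({0} : Multiset ℕ)) := by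
    intro w
    by_cases hw : w ∈ W
    · obtain ⟨c, hc⟩ := hmain w hw
      exact ⟨c, fun _ => hc⟩
    · exact ⟨0, fun h => absurd h hw⟩
  choose c hc using hchoice
  have hWcard : W.card ≤ k := by
    have h := Finset.card_le_card_of_injOn (t := Finset.range k) c
      (fun w hw => Finset.mem_range.mpr (hc w hw).1) ?_
    · simpa using h
    · intro w1 h1 w2 h2 heq
      by_contra hne
      have hp1 := (hc w1 h1).2
      have hp2 := (hc w2 h2).2
      rw [heq] at hp1
      rw [Multiset.cons_swap] at hp1 hp2
      rcases lt_or_gt_of_ne hne with h | h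
      · exact line_unique' hp2 h hp1
      · exact line_unique' hp1 h hp2
  have hW'card : W'.card ≤ F.card := by
    apply Finset.card_le_card_of_injOn (fun w => (w ::ₘ k ::ₘ ({0} : Multiset ℕ)))
    · intro w hw
      exact (Finset.mem_filter.mp hw).2
    · intro w1 _ w2 _ heq
      have h2 := congrArg Multiset.sum heq
      simp [Multiset.sum_cons] at h2
      omega
  have hsum : W'.card + W.card = n := by
    rw [hW, hW']
    rw [Finset.card_filter_add_card_filter_not
      (p := fun w => (w ::ₘ k ::ₘ ({0} : Multiset ℕ)) ∈ F)]
    exact Finset.card_range n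
  by_cases hkF : k ≤ Fmax F
  · omega
  · have hempty : W' = ∅ := by
      rw [Finset.eq_empty_iff_forall_notMem]
      intro w hw
      have hmem := (Finset.mem_filter.mp hw).2
      have : k ≤ Fmax F := mem_le_Fmax' hmem (by simp)
      omega
    rw [hempty] at hsum
    simp at hsum
    omega

/-- For every n > 2·F_max + |F|, the position {n,n,0} is a P-position of Nim−F. -/
theorem nn0_P_position (F : Finset (Multiset ℕ)) (n : ℕ)
    (hn : n > 2 * Fmax F + F.card) : PPos F {n, n, 0} := by
  classical
  have hrep : ({n, n, 0} : Multiset ℕ) = n ::ₘ n ::ₘ ({0} : Multiset ℕ) := rfl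
  have hFn : ({n, n, 0} : Multiset ℕ) ∉ F := by
    intro h
    have : n ≤ Fmax F := mem_le_Fmax' h (by simp)
    omega
  refine ⟨hFn, ?_⟩
  rw [NimP_iff']
  rintro b ⟨x, y, hxmem, hyx, rfl⟩ hbF hbP
  have hx : x = n ∨ x = 0 := by simpa using hxmem
  rcases hx with h | h
  · subst h
    rw [hrep, Multiset.erase_cons_head] at hbF hbP
    rw [Multiset.cons_swap] at hbF hbP
    exact key' F x y hyx hn ⟨hbF, hbP⟩
  · subst h
    exact absurd hyx (Nat.not_lt_zero y)
end

section
/- For ordinary three-heap Nim, with π(n) the number of P-positions {a,b,c} (unordered) with all entries less than n, for every positive integer n the limit as k → ∞ of π(n·2^k)/(n·2^k)² exists and is nonzero. -/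
open Filter

/-! By Bouton's theorem the P-positions with three heaps are exactly the multisets
`{a, b, a ^^^ b}`. Let `D(N)` count the ordered pairs `(a, b)` with `a`, `b`, `a ^^^ b < N`;
since xor commutes with halving, `D(2N) = 4 D(N)`. A P-position with three distinct heaps
comes from exactly six such pairs, and the pairs giving a repeated heap (`a = b`, `a = 0` or
`b = 0`) number at most `3N`, so `π(N) = D(N) / 6 + O(N)`. Hence
`π(n 2^k) / (n 2^k)^2 → D(n) / (6 n^2) > 0`. -/

open Finset

def nimSum (s : Multiset ℕ) : ℕ := s.fold (· ^^^ ·) 0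

theorem nimSum_cons (x : ℕ) (s : Multiset ℕ) : nimSum (x ::ₘ s) = x ^^^ nimSum s :=
  Multiset.fold_cons_left _ _ _ _

theorem nimSum_triple (a b c : ℕ) : nimSum {a, b, c} = a ^^^ b ^^^ c := by
  change nimSum (a ::ₘ b ::ₘ c ::ₘ 0) = _
  rw [nimSum_cons, nimSum_cons, nimSum_cons, nimSum, Multiset.fold_zero, Nat.xor_zero,
    Nat.xor_assoc]

theorem nimSum_cons_erase {x : ℕ} {s : Multiset ℕ} (hx : x ∈ s) (y : ℕ) :
    nimSum (y ::ₘ s.erase x) = y ^^^ x ^^^ nimSum s := by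
  conv_rhs => rw [← Multiset.cons_erase hx]
  rw [nimSum_cons, nimSum_cons, Nat.xor_assoc, xor_cancel_left]

theorem exists_xor_lt_of_lt_nimSum (s : Multiset ℕ) :
    ∀ u < nimSum s, ∃ x ∈ s, nimSum s ^^^ u ^^^ x < x := by
  induction s using Multiset.induction with
  | empty => simp [nimSum]
  | cons y t ih =>
    intro u hu
    rw [nimSum_cons] at hu ⊢
    rcases Nat.lt_xor_cases hu with h | h
    · exact ⟨y, Multiset.mem_cons_self _ _, by
        simpa [Nat.xor_comm, Nat.xor_left_comm, Nat.xor_assoc] using h⟩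
    · obtain ⟨x, hx, hlt⟩ := ih _ h
      exact ⟨x, Multiset.mem_cons_of_mem hx, by
        simpa [Nat.xor_comm, Nat.xor_left_comm, Nat.xor_assoc] using hlt⟩

theorem exists_nimMove_nimSum_eq_zero {a : Multiset ℕ} (h : nimSum a ≠ 0) :
    ∃ b, NimMove a b ∧ nimSum b = 0 := by
  obtain ⟨x, hx, hlt⟩ := exists_xor_lt_of_lt_nimSum a 0 (Nat.pos_of_ne_zero h)
  rw [Nat.xor_zero] at hlt
  exact ⟨_, ⟨x, _, hx, hlt, rfl⟩, by simp [nimSum_cons_erase hx]⟩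

theorem nimSum_ne_zero_of_nimMove {a b : Multiset ℕ} (ha : nimSum a = 0) (hab : NimMove a b) :
    nimSum b ≠ 0 := by
  obtain ⟨x, y, hx, hyx, rfl⟩ := hab
  simpa [nimSum_cons_erase hx, ha] using hyx.ne

theorem nimP_empty_iff (a : Multiset ℕ) : NimP ∅ a ↔ nimSum a = 0 := by
  induction a using (measure Multiset.sum).wf.induction with
  | _ a ih =>
  rw [NimP]
  constructor
  · intro hP
    by_contra h
    obtain ⟨b, hab, hb⟩ := exists_nimMove_nimSum_eq_zero h
    exact hP b hab (notMem_empty b) ((ih b hab.sum_lt).2 hb)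
  · intro ha b hab _ hb
    exact nimSum_ne_zero_of_nimMove ha hab ((ih b hab.sum_lt).1 hb)

def nimTriple (p : ℕ × ℕ) : Multiset ℕ := {p.1, p.2, p.1 ^^^ p.2}

theorem exists_nimTriple_eq_iff {s : Multiset ℕ} :
    (∃ p, nimTriple p = s) ↔ s.card = 3 ∧ nimSum s = 0 := by
  constructor
  · rintro ⟨p, rfl⟩
    rw [nimTriple, nimSum_triple, Nat.xor_self]
    exact ⟨rfl, rfl⟩
  · rintro ⟨hs, h0⟩
    obtain ⟨a, b, c, rfl⟩ := Multiset.card_eq_three.1 hs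
    rw [nimSum_triple, xor_eq_zero_iff] at h0
    exact ⟨(a, b), by rw [nimTriple, h0]⟩

theorem nodup_nimTriple_iff {p : ℕ × ℕ} :
    (nimTriple p).Nodup ↔ p.1 ≠ p.2 ∧ p.1 ≠ 0 ∧ p.2 ≠ 0 := by
  simp only [nimTriple, Multiset.insert_eq_cons, Multiset.nodup_cons, Multiset.mem_cons,
    Multiset.mem_singleton, Multiset.nodup_singleton, eq_comm (b := p.1 ^^^ p.2),
    xor_left_eq_self_iff, xor_right_eq_self_iff]
  tauto

def xorPairs (N : ℕ) : Finset (ℕ × ℕ) :=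
  (range N ×ˢ range N).filter fun p => p.1 ^^^ p.2 < N

theorem mem_xorPairs {N : ℕ} {p : ℕ × ℕ} :
    p ∈ xorPairs N ↔ p.1 < N ∧ p.2 < N ∧ p.1 ^^^ p.2 < N := by
  simp [xorPairs, and_assoc]

theorem forall_mem_nimTriple_lt_iff {N : ℕ} {p : ℕ × ℕ} :
    (∀ x ∈ nimTriple p, x < N) ↔ p ∈ xorPairs N := by
  simp [nimTriple, mem_xorPairs]

theorem piNim_empty_eq_card_image (N : ℕ) :
    piNim ∅ N = #((xorPairs N).image nimTriple) := by
  rw [piNim, ← Set.ncard_coe_finset]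
  congr 1
  ext s
  simp only [PPos, nimP_empty_iff, notMem_empty, not_false_eq_true, true_and,
    Set.mem_ofPred_eq, coe_image, Set.mem_image, mem_coe]
  constructor
  · rintro ⟨hs, hlt, h0⟩
    obtain ⟨p, rfl⟩ := exists_nimTriple_eq_iff.2 ⟨hs, h0⟩
    exact ⟨p, forall_mem_nimTriple_lt_iff.1 hlt, rfl⟩
  · rintro ⟨p, hp, rfl⟩
    obtain ⟨hs, h0⟩ := exists_nimTriple_eq_iff.1 ⟨p, rfl⟩
    exact ⟨hs, forall_mem_nimTriple_lt_iff.2 hp, h0⟩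

theorem mem_xorPairs_two_mul {N : ℕ} {p : ℕ × ℕ} :
    p ∈ xorPairs (2 * N) ↔ (p.1 / 2, p.2 / 2) ∈ xorPairs N := by
  simp only [mem_xorPairs, ← Nat.xor_div_two]
  omega

theorem card_xorPairs_two_mul (N : ℕ) : #(xorPairs (2 * N)) = 4 * #(xorPairs N) := by
  rw [show 4 * #(xorPairs N) = #(xorPairs N ×ˢ (range 2 ×ˢ range 2)) by simp [mul_comm]]
  refine card_nbij' (fun p => ((p.1 / 2, p.2 / 2), (p.1 % 2, p.2 % 2)))
    (fun q => (2 * q.1.1 + q.2.1, 2 * q.1.2 + q.2.2)) ?_ ?_ ?_ ?_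
  all_goals
    intro p hp
    simp only [coe_product, Set.mem_prod, mem_coe, mem_range, mem_xorPairs_two_mul] at hp ⊢
  · exact ⟨hp, by omega, by omega⟩
  · have h1 : (2 * p.1.1 + p.2.1) / 2 = p.1.1 := by omega
    have h2 : (2 * p.1.2 + p.2.2) / 2 = p.1.2 := by omega
    simpa [h1, h2] using hp.1
  · ext <;> dsimp only <;> omega
  · ext <;> dsimp only <;> omega

theorem card_xorPairs_mul_two_pow (n k : ℕ) :
    #(xorPairs (n * 2 ^ k)) = 4 ^ k * #(xorPairs n) := by
  induction k with
  | zero => simp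
  | succ k ih =>
    rw [pow_succ, ← mul_assoc, mul_comm _ 2, card_xorPairs_two_mul, ih, pow_succ]
    ring

theorem nimTriple_eq_iff_mem_offDiag {s : Multiset ℕ} (hs : s.card = 3) (hnd : s.Nodup)
    (h0 : nimSum s = 0) {p : ℕ × ℕ} : nimTriple p = s ↔ p ∈ s.toFinset.offDiag := by
  rw [mem_offDiag, Multiset.mem_toFinset, Multiset.mem_toFinset]
  constructor
  · rintro rfl
    exact ⟨by simp [nimTriple], by simp [nimTriple], (nodup_nimTriple_iff.1 hnd).1⟩
  · rintro ⟨hx, hy, hxy⟩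
    have hy' : p.2 ∈ s.erase p.1 := (Multiset.mem_erase_of_ne hxy.symm).2 hy
    obtain ⟨z, hz⟩ := Multiset.card_eq_one.1 (show ((s.erase p.1).erase p.2).card = 1 by
      simp [Multiset.card_erase_of_mem, hx, hy', hs])
    have hs' : s = {p.1, p.2, z} := by
      rw [← Multiset.cons_erase hx, ← Multiset.cons_erase hy', hz]
      rfl
    rw [hs', nimSum_triple, xor_eq_zero_iff] at h0
    rw [hs', nimTriple, h0]

theorem card_filter_nodup_xorPairs (N : ℕ) :
    #((xorPairs N).filter fun p => (nimTriple p).Nodup) =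
      6 * #(((xorPairs N).image nimTriple).filter Multiset.Nodup) := by
  rw [filter_image, card_eq_sum_card_image nimTriple, mul_comm, ← smul_eq_mul, ← sum_const]
  refine sum_congr rfl fun t ht => ?_
  obtain ⟨q, hq, rfl⟩ := mem_image.1 ht
  rw [mem_filter] at hq
  obtain ⟨hs, h0⟩ := exists_nimTriple_eq_iff.1 ⟨q, rfl⟩
  have hfiber : {p ∈ (xorPairs N).filter fun p => (nimTriple p).Nodup |
      nimTriple p = nimTriple q} = (nimTriple q).toFinset.offDiag := by
    ext p
    rw [mem_filter, mem_filter, ← nimTriple_eq_iff_mem_offDiag hs hq.2 h0]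
    refine ⟨And.right, fun h => ⟨⟨?_, h ▸ hq.2⟩, h⟩⟩
    exact forall_mem_nimTriple_lt_iff.1 (h ▸ forall_mem_nimTriple_lt_iff.2 hq.1)
  rw [hfiber, offDiag_card, Multiset.toFinset_card_of_nodup hq.2, hs]

theorem card_filter_not_nodup_xorPairs_le (N : ℕ) :
    #((xorPairs N).filter fun p => ¬(nimTriple p).Nodup) ≤ 3 * N := by
  calc _ ≤ #((range N).biUnion fun a => {(a, a), (a, 0), (0, a)}) := card_le_card ?_
    _ ≤ #(range N) * 3 := card_biUnion_le_card_mul _ _ _ fun _ _ => card_le_three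
    _ = 3 * N := by rw [card_range, mul_comm]
  rintro ⟨a, b⟩ hp
  rw [mem_filter, mem_xorPairs, nodup_nimTriple_iff] at hp
  obtain ⟨⟨ha, hb, -⟩, hnd⟩ := hp
  simp only [mem_biUnion, mem_range, mem_insert, mem_singleton]
  simp only [not_and_or, not_not] at hnd
  rcases hnd with rfl | rfl | rfl
  · exact ⟨a, ha, Or.inl rfl⟩
  · exact ⟨b, hb, Or.inr (Or.inr rfl)⟩
  · exact ⟨a, ha, Or.inr (Or.inl rfl)⟩

theorem abs_piNim_empty_sub_le (N : ℕ) :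
    |(piNim ∅ N : ℝ) - #(xorPairs N) / 6| ≤ 3 * N := by
  rw [piNim_empty_eq_card_image]
  have hX := card_filter_add_card_filter_not (s := xorPairs N) fun p => (nimTriple p).Nodup
  have hT := card_filter_add_card_filter_not (s := (xorPairs N).image nimTriple) Multiset.Nodup
  have hM : #(((xorPairs N).image nimTriple).filter fun t => ¬t.Nodup) ≤
      #((xorPairs N).filter fun p => ¬(nimTriple p).Nodup) := by
    rw [filter_image]
    exact card_image_le
  have h6 := card_filter_nodup_xorPairs N
  have h3 := card_filter_not_nodup_xorPairs_le N
  have hlo : #(xorPairs N) ≤ 6 * #((xorPairs N).image nimTriple) + 3 * N := by omega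
  have hhi : 6 * #((xorPairs N).image nimTriple) ≤ #(xorPairs N) + 15 * N := by omega
  rw [abs_sub_le_iff]
  constructor
  · have : (6 * #((xorPairs N).image nimTriple) : ℝ) ≤ #(xorPairs N) + 15 * N := by
      exact_mod_cast hhi
    linarith
  · have : (#(xorPairs N) : ℝ) ≤ 6 * #((xorPairs N).image nimTriple) + 3 * N := by
      exact_mod_cast hlo
    linarith

theorem tendsto_div_sq_of_abs_sub_le {f g : ℕ → ℝ} {C : ℝ} {n : ℕ} (hn : 0 < n)
    (hg : ∀ k, g (n * 2 ^ k) = 4 ^ k * g n) (hfg : ∀ N, |f N - g N| ≤ C * N) :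
    Tendsto (fun k : ℕ => f (n * 2 ^ k) / ((n * 2 ^ k : ℕ) : ℝ) ^ 2) atTop
      (nhds (g n / n ^ 2)) := by
  have hbound (k : ℕ) :
      |f (n * 2 ^ k) / ((n * 2 ^ k : ℕ) : ℝ) ^ 2 - g n / n ^ 2| ≤ C / n * (1 / 2) ^ k := by
    have hN : ((n * 2 ^ k : ℕ) : ℝ) = n * 2 ^ k := by push_cast; ring
    have h4 : (4 : ℝ) ^ k = (2 ^ k) ^ 2 := by rw [← pow_mul, mul_comm, pow_mul]; norm_num
    have hsub : f (n * 2 ^ k) / ((n : ℝ) * 2 ^ k) ^ 2 - g n / n ^ 2 =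
        (f (n * 2 ^ k) - g (n * 2 ^ k)) / ((n : ℝ) * 2 ^ k) ^ 2 := by
      rw [hg, h4]
      field_simp
    rw [hN, hsub, abs_div, abs_of_pos (by positivity : (0 : ℝ) < (n * 2 ^ k) ^ 2),
      div_le_iff₀ (by positivity)]
    calc _ ≤ C * ((n * 2 ^ k : ℕ) : ℝ) := hfg _
      _ = _ := by
        rw [hN]
        field_simp
        rw [mul_assoc, ← mul_pow]
        norm_num
  rw [tendsto_iff_norm_sub_tendsto_zero]
  refine squeeze_zero (fun _ => norm_nonneg _) hbound ?_
  simpa using (tendsto_pow_atTop_nhds_zero_of_lt_one (by norm_num)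
    (by norm_num : (1 / 2 : ℝ) < 1)).const_mul (C / n)

/-- Period-two scale invariance for ordinary Nim: π(n·2^k)/(n·2^k)² converges
to a nonzero constant as k → ∞. -/
theorem nim_period_two_scale_invariance (n : ℕ) (hn : 0 < n) :
    ∃ L : ℝ, L ≠ 0 ∧
      Tendsto (fun k : ℕ => (piNim ∅ (n * 2 ^ k) : ℝ) / ((n * 2 ^ k : ℕ) : ℝ) ^ 2)
        atTop (nhds L) := by
  have hD : (0 : ℝ) < #(xorPairs n) := by
    exact_mod_cast card_pos.2 ⟨(0, 0), mem_xorPairs.2 ⟨hn, hn, hn⟩⟩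
  refine ⟨#(xorPairs n) / 6 / n ^ 2, by positivity, ?_⟩
  exact tendsto_div_sq_of_abs_sub_le (f := fun N => piNim ∅ N)
    (g := fun N => #(xorPairs N) / 6) hn
    (fun k => by simp only [card_xorPairs_mul_two_pow]; push_cast; ring) abs_piNim_empty_sub_le
end
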